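/- arXiv:1304.5109 — 6 statements merged into one kernel-verified Lean document; each statement's English description precedes it below -/
import Mathlib

section
/- For every word u over {a,b} and every natural number m with m > log₄(4·|u| + 4/3) − log₄(2/3) + 3 (where |u| is the length of u), the m-fold iterate t^m(u) is a prefix of the infinite periodic word (ab)^ω = ababab⋯. Consequently, for any k there exists n = O(log k) such that for all words u of length k, t^n(u) is a prefix of (ab)^ω. -/
/-- States of the KSPM(3) transducer. -/
inductive TSt | s00 | s10 | s20 | s11 | s12 | s21 | s22
  deriving DecidableEq

/-- Letters: `a = false`, `b = true`. Transition function of the transducer: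
(state, input letter) ↦ (next state, output word). -/
def tStep : TSt → Bool → TSt × List Bool
  | .s00, false => (.s10, [])
  | .s00, true  => (.s11, [])
  | .s10, false => (.s20, [])
  | .s10, true  => (.s21, [])
  | .s20, false => (.s11, [])
  | .s20, true  => (.s12, [])
  | .s11, false => (.s21, [])
  | .s11, true  => (.s22, [])
  | .s12, false => (.s22, [])
  | .s12, true  => (.s21, [true])
  | .s21, false => (.s12, [false])
  | .s21, true  => (.s11, [false, true])
  | .s22, false => (.s11, [true, false])
  | .s22, true  => (.s12, [true, false])

/-- Run the transducer on a word from a given state, concatenating outputs. -/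
def runT : TSt → List Bool → List Bool
  | _, [] => []
  | q, x :: u => (tStep q x).2 ++ runT (tStep q x).1 u

/-- `t(u)` : run from the initial state `00`. -/
def tT (u : List Bool) : List Bool := runT .s00 u

/-- `t'(u)` : run from the state `21`. -/
def tT' (u : List Bool) : List Bool := runT .s21 u

/-- `w` is a prefix of the infinite periodic word `(ab)^ω` (with `a = false`,
`b = true`): the letter at position `i` is `a` iff `i` is even. -/
def PrefixAB (w : List Bool) : Prop :=
  ∀ i (hi : i < w.length), w.get ⟨i, hi⟩ = decide (i % 2 = 1)

/-- The language `L = {ab·u : u word} ∪ {ε, a}`. -/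
def LangL : Set (List Bool) :=
  {w | ∃ u : List Bool, w = false :: true :: u} ∪ {[], [false]}

/-- The height `h(u) = | |u|_a − |u|_b |`. -/
def hgt (u : List Bool) : ℕ :=
  ((u.count false : ℤ) - (u.count true : ℤ)).natAbs

/-- The maximal height `g(u) = max { h(u') : u' prefix of u }`. -/
def gmax (u : List Bool) : ℕ := (u.inits.map hgt).foldr max 0

/-!
Write `h(u) = |u|_a - |u|_b` for the signed height. One application of `t` divides heights by
about four: while `T` reads a word, the defect `h(input read) - 4 h(output written)` stays in
`[-4, 4]`, and every output chunk has height at most `1`. Hence `g(t u) ≤ (g u + 8) / 4`, so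
after `j` rounds with `3 |u| < 4 ^ j` every prefix has height at most `2`. On such words three
more rounds of `t` produce a prefix of `(ab)^ω`: this is a finite check on the composite
transducer `t ∘ t ∘ t` run alongside the height, which now takes only five values.
-/

namespace Transducer

variable {σ τ α β γ : Type*}

def run (f : σ → α → σ × List β) : σ → List α → List β
  | _, [] => []
  | q, x :: u => (f q x).2 ++ run f (f q x).1 u

def state (f : σ → α → σ × List β) (q : σ) (u : List α) : σ :=
  u.foldl (fun q x => (f q x).1) q

theorem run_append (f : σ → α → σ × List β) (q : σ) (u v : List α) :
    run f q (u ++ v) = run f q u ++ run f (state f q u) v := by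
  induction u generalizing q with
  | nil => rfl
  | cons x u ih => simp [run, state, ih]

def comp (f : σ → α → σ × List β) (g : τ → β → τ × List γ) :
    σ × τ → α → (σ × τ) × List γ
  | (q, r), x => (((f q x).1, state g r (f q x).2), run g r (f q x).2)

theorem run_comp (f : σ → α → σ × List β) (g : τ → β → τ × List γ) (q : σ) (r : τ)
    (u : List α) : run (comp f g) (q, r) u = run g r (run f q u) := by
  induction u generalizing q r with
  | nil => rfl
  | cons x u ih => simp [run, comp, ih, run_append]

end Transducer

theorem runT_eq_run : runT = Transducer.run tStep := by
  funext q u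
  induction u generalizing q with
  | nil => rfl
  | cons x u ih => simp [runT, Transducer.run, ih]

def signedHeight (u : List Bool) : ℤ := u.count false - u.count true

@[simp]
theorem signedHeight_nil : signedHeight [] = 0 := rfl

@[simp]
theorem signedHeight_cons (x : Bool) (u : List Bool) :
    signedHeight (x :: u) = (if x then -1 else 1) + signedHeight u := by
  cases x <;> simp [signedHeight] <;> ring

theorem signedHeight_append (u v : List Bool) :
    signedHeight (u ++ v) = signedHeight u + signedHeight v := by
  simp only [signedHeight, List.count_append]
  push_cast
  ring

theorem abs_signedHeight_le_length (u : List Bool) : |signedHeight u| ≤ u.length := by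
  induction u with
  | nil => simp
  | cons x u ih =>
    rw [abs_le] at ih ⊢
    cases x <;> simp <;> omega

theorem gmax_le_iff {u : List Bool} {B : ℕ} :
    gmax u ≤ B ↔ ∀ p, p <+: u → |signedHeight p| ≤ B := by
  have foldr_max_le : ∀ l : List ℕ, l.foldr max 0 ≤ B ↔ ∀ n ∈ l, n ≤ B := fun l => by
    induction l <;> simp [*]
  have hgt_le : ∀ p, hgt p ≤ B ↔ |signedHeight p| ≤ B := fun p => by
    rw [Int.abs_eq_natAbs]
    exact_mod_cast Iff.rfl
  simp [gmax, foldr_max_le, hgt_le]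

theorem gmax_le_length (u : List Bool) : gmax u ≤ u.length :=
  gmax_le_iff.mpr fun p hp =>
    (abs_signedHeight_le_length p).trans (by exact_mod_cast hp.length_le)

/-- Whenever `T` is in state `q`, the defect `signedHeight (input read) - 4 * signedHeight
(output written)` lies between `defectLo q` and `defectHi q`. -/
def defectLo : TSt → ℤ
  | .s00 => 0 | .s10 => 1 | .s20 => 2 | .s11 => -1 | .s12 => -3 | .s21 => 0 | .s22 => -2

def defectHi : TSt → ℤ
  | .s00 => 0 | .s10 => 1 | .s20 => 2 | .s11 => 3 | .s12 => 1 | .s21 => 4 | .s22 => 2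

theorem neg_four_le_defectLo_and_defectHi_le_four (q : TSt) :
    -4 ≤ defectLo q ∧ defectHi q ≤ 4 := by
  cases q <;> simp [defectLo, defectHi]

theorem defect_tStep (q : TSt) (x : Bool) {d : ℤ} (hlo : defectLo q ≤ d)
    (hhi : d ≤ defectHi q) :
    defectLo (tStep q x).1 ≤ d + signedHeight [x] - 4 * signedHeight (tStep q x).2 ∧
      d + signedHeight [x] - 4 * signedHeight (tStep q x).2 ≤ defectHi (tStep q x).1 := by
  cases q <;> cases x <;> simp [tStep, defectLo, defectHi] at * <;> omega

theorem abs_signedHeight_le_one_of_prefix_tStep (q : TSt) (x : Bool) {c : List Bool}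
    (hc : c <+: (tStep q x).2) : |signedHeight c| ≤ 1 := by
  rw [← List.mem_inits] at hc
  revert c
  cases q <;> cases x <;> decide

theorem exists_prefix_abs_defect_le (u : List Bool) (q : TSt) {d : ℤ}
    (hlo : defectLo q ≤ d) (hhi : d ≤ defectHi q) {w : List Bool}
    (hw : w <+: Transducer.run tStep q u) :
    ∃ p, p <+: u ∧ |d + signedHeight p - 4 * signedHeight w| ≤ 8 := by
  have hq := neg_four_le_defectLo_and_defectHi_le_four q
  induction u generalizing q d w with
  | nil =>
    obtain rfl : w = [] := List.prefix_nil.mp hw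
    exact ⟨[], List.nil_prefix, by simp [abs_le]; omega⟩
  | cons x u ih =>
    rcases List.prefix_or_prefix_of_prefix hw (List.prefix_append _ _) with hc | ⟨w', rfl⟩
    · have := abs_signedHeight_le_one_of_prefix_tStep q x hc
      refine ⟨[], List.nil_prefix, ?_⟩
      rw [abs_le] at this ⊢
      simp only [signedHeight_nil]
      omega
    · have hstep := defect_tStep q x hlo hhi
      obtain ⟨p, hp, hpw⟩ := ih _ hstep.1 hstep.2 ((List.prefix_append_right_inj _).mp hw)
        (neg_four_le_defectLo_and_defectHi_le_four _)
      refine ⟨x :: p, List.cons_prefix_cons.mpr ⟨rfl, hp⟩, ?_⟩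
      simp only [signedHeight_cons, signedHeight_nil, add_zero] at hpw
      rw [signedHeight_cons, signedHeight_append]
      convert hpw using 2
      ring

theorem gmax_tT_le (u : List Bool) : gmax (tT u) ≤ (gmax u + 8) / 4 := by
  have hu := gmax_le_iff.mp (le_refl (gmax u))
  refine gmax_le_iff.mpr fun w hw => ?_
  rw [tT, runT_eq_run] at hw
  obtain ⟨p, hp, hpw⟩ := exists_prefix_abs_defect_le u .s00 (d := 0) le_rfl le_rfl hw
  have := hu p hp
  rw [abs_le] at this hpw ⊢
  push_cast
  omega

theorem three_mul_gmax_iterate_tT_mul_pow_le (u : List Bool) (j : ℕ) :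
    3 * gmax (tT^[j] u) * 4 ^ j ≤ 3 * gmax u + 8 * 4 ^ j := by
  induction j with
  | zero => simp
  | succ j ih =>
    have h4 : 4 * gmax (tT (tT^[j] u)) ≤ gmax (tT^[j] u) + 8 := by
      have := gmax_tT_le (tT^[j] u)
      omega
    rw [Function.iterate_succ_apply']
    calc 3 * gmax (tT (tT^[j] u)) * 4 ^ (j + 1)
        = 3 * (4 * gmax (tT (tT^[j] u))) * 4 ^ j := by ring
      _ ≤ 3 * (gmax (tT^[j] u) + 8) * 4 ^ j := by gcongr
      _ ≤ 3 * gmax u + 8 * 4 ^ (j + 1) := by rw [pow_succ]; linarith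

theorem gmax_iterate_tT_le_two {u : List Bool} {j : ℕ} (h : 3 * gmax u < 4 ^ j) :
    gmax (tT^[j] u) ≤ 2 := by
  have := three_mul_gmax_iterate_tT_mul_pow_le u j
  have : 3 * gmax (tT^[j] u) * 4 ^ j < 9 * 4 ^ j := by omega
  have := Nat.lt_of_mul_lt_mul_right this
  omega

def Alternating (p : Bool) (w : List Bool) : Prop :=
  ∀ i (hi : i < w.length), w[i] = (p ^^ decide (i % 2 = 1))

instance (p : Bool) (w : List Bool) : Decidable (Alternating p w) := by
  unfold Alternating
  infer_instance

theorem prefixAB_iff_alternating_false {w : List Bool} : PrefixAB w ↔ Alternating false w := by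
  simp [PrefixAB, Alternating]

theorem decide_add_mod_two (m n : ℕ) :
    decide ((m + n) % 2 = 1) = (decide (m % 2 = 1) ^^ decide (n % 2 = 1)) := by
  rcases Nat.mod_two_eq_zero_or_one m with hm | hm <;>
    rcases Nat.mod_two_eq_zero_or_one n with hn | hn <;> simp [Nat.add_mod, hm, hn]

theorem Alternating.append {p : Bool} {o w : List Bool} (ho : Alternating p o)
    (hw : Alternating (p ^^ decide (o.length % 2 = 1)) w) : Alternating p (o ++ w) := by
  intro i hi
  by_cases hio : i < o.length
  · rw [List.getElem_append_left hio, ho i hio]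
  · obtain ⟨j, rfl⟩ : ∃ j, i = o.length + j := ⟨i - o.length, by omega⟩
    rw [List.getElem_append_right (by omega)]
    simp only [Nat.add_sub_cancel_left, decide_add_mod_two, ← Bool.xor_assoc]
    exact hw j (by simp at hi; omega)

theorem alternating_run_of_invariant {σ : Type*} (f : σ → Bool → σ × List Bool)
    (Inv : ℤ → σ → Bool → Prop) (B : ℤ)
    (hInv : ∀ h q p x, Inv h q p → |h + signedHeight [x]| ≤ B →
      Alternating p (f q x).2 ∧
        Inv (h + signedHeight [x]) (f q x).1 (p ^^ decide ((f q x).2.length % 2 = 1)))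
    (u : List Bool) {h : ℤ} {q : σ} {p : Bool} (hhqp : Inv h q p)
    (hu : ∀ r, r <+: u → |h + signedHeight r| ≤ B) : Alternating p (Transducer.run f q u) := by
  induction u generalizing h q p with
  | nil => intro i hi; simp [Transducer.run] at hi
  | cons x u ih =>
    have hx := hu [x] (List.cons_prefix_cons.mpr ⟨rfl, List.nil_prefix⟩)
    obtain ⟨hout, hnext⟩ := hInv h q p x hhqp hx
    refine hout.append (ih hnext fun r hr => ?_)
    have := hu (x :: r) (List.cons_prefix_cons.mpr ⟨rfl, hr⟩)
    simpa [add_assoc] using this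

def tStep3 : TSt × TSt × TSt → Bool → (TSt × TSt × TSt) × List Bool :=
  Transducer.comp tStep (Transducer.comp tStep tStep)

/-- The configurations (height read so far, states of the three copies of `T`, next letter
expected in the output) reachable from `(0, (00, 00, 00), a)` while the height stays in
`[-2, 2]`. -/
def tripleConfigs : List (ℤ × (TSt × TSt × TSt) × Bool) :=
  [(-2, (.s22, .s00, .s00), false), (-2, (.s22, .s11, .s21), false),
   (-2, (.s22, .s21, .s00), false), (-2, (.s22, .s21, .s21), false),
   (-1, (.s11, .s00, .s00), false), (-1, (.s11, .s11, .s21), false),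
   (-1, (.s11, .s21, .s00), false), (-1, (.s11, .s21, .s21), false),
   (0, (.s00, .s00, .s00), false), (0, (.s21, .s00, .s00), false),
   (0, (.s21, .s11, .s00), false), (0, (.s21, .s11, .s21), false),
   (0, (.s21, .s21, .s00), false), (0, (.s21, .s21, .s21), false),
   (1, (.s10, .s00, .s00), false), (1, (.s12, .s00, .s00), false),
   (1, (.s12, .s10, .s00), false), (1, (.s12, .s12, .s10), false),
   (1, (.s12, .s12, .s12), true), (1, (.s12, .s21, .s00), false),
   (1, (.s12, .s21, .s21), false), (2, (.s20, .s00, .s00), false),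
   (2, (.s22, .s00, .s00), false), (2, (.s22, .s10, .s00), false),
   (2, (.s22, .s12, .s10), false), (2, (.s22, .s12, .s12), true),
   (2, (.s22, .s21, .s00), false), (2, (.s22, .s21, .s21), false)]

theorem tripleConfigs_closed :
    ∀ c ∈ tripleConfigs, ∀ x : Bool, |c.1 + signedHeight [x]| ≤ 2 →
    Alternating c.2.2 (tStep3 c.2.1 x).2 ∧
      (c.1 + signedHeight [x], (tStep3 c.2.1 x).1,
        c.2.2 ^^ decide ((tStep3 c.2.1 x).2.length % 2 = 1)) ∈ tripleConfigs := by
  decide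

theorem prefixAB_tT_tT_tT {u : List Bool} (hu : gmax u ≤ 2) : PrefixAB (tT (tT (tT u))) := by
  have h := alternating_run_of_invariant tStep3 (fun h q p => (h, q, p) ∈ tripleConfigs) 2
    (fun h q p x hc hx => tripleConfigs_closed (h, q, p) hc x hx) u
    (h := 0) (q := (.s00, .s00, .s00)) (p := false) (by decide)
    (by simpa using gmax_le_iff.mp hu)
  rwa [tStep3, Transducer.run_comp, Transducer.run_comp, ← runT_eq_run,
    ← prefixAB_iff_alternating_false] at h

theorem prefixAB_iterate_tT_three_add {u : List Bool} {j : ℕ} (h : 3 * u.length < 4 ^ j) :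
    PrefixAB (tT^[3 + j] u) := by
  rw [Function.iterate_add_apply]
  exact prefixAB_tT_tT_tT
    (gmax_iterate_tT_le_two ((Nat.mul_le_mul_left 3 (gmax_le_length u)).trans_lt h))

theorem prefixAB_iterate_tT_of_logb_lt {u : List Bool} {m : ℕ}
    (h : Real.logb 4 (6 * u.length + 2) + 3 < m) : PrefixAB (tT^[m] u) := by
  have hlen : (0 : ℝ) ≤ u.length := u.length.cast_nonneg
  have hlog : 0 ≤ Real.logb 4 (6 * u.length + 2) := Real.logb_nonneg (by norm_num) (by linarith)
  obtain ⟨j, rfl⟩ : ∃ j, m = 3 + j := ⟨m - 3, by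
    have : (3 : ℝ) < m := by linarith
    have : 3 < m := by exact_mod_cast this
    omega⟩
  apply prefixAB_iterate_tT_three_add
  have : (6 * u.length + 2 : ℝ) < 4 ^ j := by
    rw [← Real.rpow_natCast, ← Real.logb_lt_iff_lt_rpow (by norm_num) (by positivity)]
    push_cast at h
    linarith
  have : 6 * u.length + 2 < 4 ^ j := by exact_mod_cast this
  omega

theorem logb_four_sub_logb_four (x : ℝ) (hx : 0 ≤ x) :
    Real.logb 4 (4 * x + 4 / 3) - Real.logb 4 (2 / 3) = Real.logb 4 (6 * x + 2) := by
  rw [← Real.logb_div (by positivity) (by norm_num)]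
  congr 1
  field_simp
  ring

theorem three_mul_lt_four_pow_log (k : ℕ) : 3 * k < 4 ^ (Nat.log 4 (k + 2) + 2) := by
  have := Nat.lt_pow_succ_log_self (by norm_num : 1 < 4) (k + 2)
  rw [Nat.succ_eq_add_one] at this
  rw [pow_succ 4 (_ + 1)]
  omega

theorem natLog_add_five_le_mul_log (k : ℕ) :
    (Nat.log 4 (k + 2) : ℝ) + 5 ≤ (1 / Real.log 4 + 5 / Real.log 2) * Real.log (k + 2) := by
  have hk : (2 : ℝ) ≤ k + 2 := by linarith [k.cast_nonneg (α := ℝ)]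
  have hnat : (Nat.log 4 (k + 2) : ℝ) ≤ Real.log (k + 2) / Real.log 4 := by
    have := Real.natLog_le_logb (k + 2) 4
    push_cast at this
    rwa [Real.logb] at this
  have hfive : (5 : ℝ) ≤ 5 / Real.log 2 * Real.log (k + 2) := by
    have hl2 : 0 < Real.log 2 := Real.log_pos (by norm_num)
    rw [div_mul_eq_mul_div, le_div_iff₀ hl2]
    linarith [Real.log_le_log (by norm_num) hk]
  calc (Nat.log 4 (k + 2) : ℝ) + 5
      ≤ Real.log (k + 2) / Real.log 4 + 5 / Real.log 2 * Real.log (k + 2) := by linarith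
    _ = (1 / Real.log 4 + 5 / Real.log 2) * Real.log (k + 2) := by ring

/-- For every word `u` and every `m > log₄(4|u| + 4/3) − log₄(2/3) + 3`, the
iterate `t^m(u)` is a prefix of `(ab)^ω`; consequently, for any `k` there is
`n = O(log k)` such that `t^n(u)` is a prefix of `(ab)^ω` for all `u` of
length `k`. -/
theorem iterate_transducer_prefix_ab :
    (∀ u : List Bool, ∀ m : ℕ,
      Real.logb 4 (4 * (u.length : ℝ) + 4 / 3) - Real.logb 4 (2 / 3) + 3 < (m : ℝ) →
      PrefixAB (tT^[m] u)) ∧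
    ∃ C : ℝ, 0 < C ∧ ∀ k : ℕ, ∃ n : ℕ, (n : ℝ) ≤ C * Real.log (k + 2) ∧
      ∀ u : List Bool, u.length = k → PrefixAB (tT^[n] u) := by
  refine ⟨fun u m h => prefixAB_iterate_tT_of_logb_lt ?_,
    1 / Real.log 4 + 5 / Real.log 2, by positivity, fun k => ⟨3 + (Nat.log 4 (k + 2) + 2), ?_,
      fun u hu => prefixAB_iterate_tT_three_add (hu ▸ three_mul_lt_four_pow_log k)⟩⟩
  · rwa [logb_four_sub_logb_four _ u.length.cast_nonneg] at h
  · push_cast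
    linarith [natLog_add_five_le_mul_log k]
end

section
/- Let s^k = (s^k_1,…,s^k_T) be the k-th avalanche and, for a time t < T, set r_t = max{s^k_1,…,s^k_t}. Then: (i) if s^k_{t+1} < r_t, then s^k_{t+1} is the largest column i such that i < r_t and i does not occur in (s^k_1,…,s^k_t), and moreover r_t − s^k_{t+1} < D−1; (ii) if s^k_{t+1} > r_t, then s^k_{t+1} ≤ r_t + D−1. -/
open scoped Classical

/-- A configuration of KSPM: a sequence of height differences. -/
abbrev Config := ℕ → ℕ

/-- The result of firing column `i` in configuration `σ` (KSPM(D) rule). -/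
def fireAt (D : ℕ) (σ : Config) (i : ℕ) : Config := fun j =>
  if j = i then σ i - D
  else if j + 1 = i then σ j + (D - 1)
  else if j = i + D - 1 then σ j + 1
  else σ j

/-- `σ →_i σ'` : column `i` can be fired in `σ`, producing `σ'`. -/
def Step (D : ℕ) (σ : Config) (i : ℕ) (σ' : Config) : Prop :=
  D ≤ σ i ∧ σ' = fireAt D σ i

/-- `σ → σ'`. -/
def StepRel (D : ℕ) (σ σ' : Config) : Prop := ∃ i, Step D σ i σ'

/-- `σ →* σ'`. -/
def Reaches (D : ℕ) : Config → Config → Prop := Relation.ReflTransGen (StepRel D)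

/-- A configuration is stable (a fixed point) when no transition applies. -/
def Stable (D : ℕ) (σ : Config) : Prop := ∀ i, σ i < D

/-- `Exec D σ s σ'` : the strategy `s` leads from `σ` to `σ'`. -/
def Exec (D : ℕ) : Config → List ℕ → Config → Prop
  | σ, [], σ' => σ' = σ
  | σ, i :: s, σ' => D ≤ σ i ∧ Exec D (fireAt D σ i) s σ'

/-- The initial configuration with `N` stacked grains on column 0. -/
def grains (N : ℕ) : Config := fun i => if i = 0 then N else 0

/-- `σ^{↓0}` : one grain added on column 0. -/
def addGrain (σ : Config) : Config := fun i => if i = 0 then σ i + 1 else σ i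

/-- `π(σ)` : the (unique) stable configuration reachable from `σ`. -/
noncomputable def piCfg (D : ℕ) (σ : Config) : Config :=
  Classical.epsilon fun μ => Reaches D σ μ ∧ Stable D μ

/-- `π(N)` : the stable configuration reached from `N` stacked grains. -/
noncomputable def piN (D N : ℕ) : Config := piCfg D (grains N)

/-- The `k`-th avalanche: the lexicographically least strategy from
`π(k−1)^{↓0}` to `π(k)`. -/
noncomputable def avalanche (D k : ℕ) : List ℕ :=
  Classical.epsilon fun s =>
    Exec D (addGrain (piN D (k - 1))) s (piN D k) ∧
    ∀ s', Exec D (addGrain (piN D (k - 1))) s' (piN D k) →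
      s = s' ∨ List.Lex (· < ·) s s'

/-- `p` is a peak of the strategy `s` : it is fired at some time, and is
larger than every previously fired column. -/
def IsPeak (s : List ℕ) (p : ℕ) : Prop :=
  ∃ t : Fin s.length, s.get t = p ∧ ∀ t' : Fin s.length, t' < t → s.get t' < p

/-- An avalanche is dense from `l` : with `m` its greatest fired column, every
column of `[l, m]` is fired. -/
def DenseFrom (s : List ℕ) (l : ℕ) : Prop :=
  ∃ m, (∀ i, l ≤ i → i ≤ m → i ∈ s) ∧ ∀ i, m < i → i ∉ s

/-- `L'(D,k)` : the least column from which the `k`-th avalanche is dense. -/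
noncomputable def Lp (D k : ℕ) : ℕ := sInf {l | DenseFrom (avalanche D k) l}

/-- The global density column `L(D,N)`. -/
noncomputable def Lgdc (D N : ℕ) : ℕ := (Finset.Icc 1 N).sup (Lp D)

/-- Indices `k ∈ [1,N]` of the long avalanches up to `N` (those firing column
`L(D,N)+D−1`), in increasing order: this enumerates `Φ(D,N)`. -/
noncomputable def longList (D N : ℕ) : List ℕ :=
  (List.range (N + 1)).filter fun k =>
    decide (1 ≤ k ∧ Lgdc D N + D - 1 ∈ avalanche D k)

/-!
`π(k−1)^{↓0}` is a stable configuration with one extra grain on column 0. Counting grains, no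
column fires twice in a strategy from such a configuration, and an unfired column `v ≥ 1` whose
right neighbour `v + 1` has not fired either can only be fireable once `v − (D − 1)` has fired.
The lexicographically least stabilizing strategy is greedy: it always fires the least fireable
column, because by the abelian property any fireable column can be moved to the front of what
remains. Along a greedy strategy one shows by induction that an unfired fireable column below the
running maximum `r` is the topmost unfired column below `r` and lies within `D − 2` of it; this
is (i), and (ii) holds because a new maximum `v` was fed by `v − (D − 1) ≤ r`.
-/

section

variable {D : ℕ} {σ μ τ μ₀ : Config} {i j v : ℕ} {s p q : List ℕ}

lemma fireAt_of_ne (h₁ : j ≠ i) (h₂ : j + 1 ≠ i) (h₃ : j ≠ i + D - 1) : fireAt D σ i j = σ j := by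
  simp [fireAt, h₁, h₂, h₃]

lemma le_fireAt_of_ne (h : j ≠ i) : σ j ≤ fireAt D σ i j := by
  unfold fireAt
  split_ifs <;> omega

lemma fireAt_comm (hij : i ≠ j) (hi : D ≤ σ i) (hj : D ≤ σ j) :
    fireAt D (fireAt D σ i) j = fireAt D (fireAt D σ j) i := by
  funext x
  simp only [fireAt]
  split_ifs <;> omega

lemma addGrain_fireAt (hi : D ≤ σ i) : addGrain (fireAt D σ i) = fireAt D (addGrain σ) i := by
  funext x
  simp only [addGrain, fireAt]
  split_ifs <;> omega

lemma exec_append : Exec D σ (s ++ p) μ ↔ ∃ τ, Exec D σ s τ ∧ Exec D τ p μ := by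
  induction s generalizing σ with
  | nil => simp [Exec]
  | cons i s ih => simp [Exec, ih, and_assoc]

lemma exec_append_singleton :
    Exec D σ (s ++ [i]) μ ↔ ∃ τ, Exec D σ s τ ∧ D ≤ τ i ∧ μ = fireAt D τ i := by
  simp [exec_append, Exec]

lemma Exec.right_unique {μ' : Config} (h : Exec D σ s μ) (h' : Exec D σ s μ') : μ = μ' := by
  induction s generalizing σ with
  | nil => exact h.trans h'.symm
  | cons i s ih => exact ih h.2 h'.2

lemma Exec.addGrain_addGrain (h : Exec D σ s μ) : Exec D (addGrain σ) s (addGrain μ) := by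
  induction s generalizing σ with
  | nil => rw [show μ = σ from h]; rfl
  | cons i s ih =>
    refine ⟨h.1.trans ?_, addGrain_fireAt h.1 ▸ ih h.2⟩
    simp only [addGrain]
    split_ifs <;> omega

lemma Reaches.exists_exec (h : Reaches D σ μ) : ∃ s, Exec D σ s μ := by
  induction h with
  | refl => exact ⟨[], rfl⟩
  | tail _ hstep ih =>
    obtain ⟨s, hs⟩ := ih
    obtain ⟨i, hi, rfl⟩ := hstep
    exact ⟨s ++ [i], exec_append_singleton.2 ⟨_, hs, hi, rfl⟩⟩

/-- The abelian property of the model. -/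
lemma Exec.erase (hμ : Stable D μ) (h : Exec D σ s μ) (hi : D ≤ σ i) :
    i ∈ s ∧ Exec D (fireAt D σ i) (s.erase i) μ := by
  induction s generalizing σ with
  | nil =>
    obtain rfl : μ = σ := h
    exact absurd hi (not_le.2 (hμ i))
  | cons j s ih =>
    obtain ⟨hj, hs⟩ := h
    by_cases hji : j = i
    · subst hji
      simpa using hs
    · obtain ⟨hmem, hs'⟩ := ih hs (hi.trans (le_fireAt_of_ne (Ne.symm hji)))
      rw [fireAt_comm hji hj hi] at hs'
      refine ⟨List.mem_cons_of_mem j hmem, ?_⟩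
      rw [List.erase_cons_tail (by simpa using hji)]
      exact ⟨hj.trans (le_fireAt_of_ne hji), hs'⟩

lemma Exec.exists_of_stable (hμ : Stable D μ) (h : Exec D σ s μ) (hp : Exec D σ p τ) :
    ∃ q, Exec D τ q μ := by
  induction p generalizing σ s with
  | nil =>
    obtain rfl : τ = σ := hp
    exact ⟨s, h⟩
  | cons i p ih => exact ih (h.erase hμ hp.1).2 hp.2

lemma Exec.exists_lexLeast (hμ : Stable D μ) (h : Exec D σ s μ) :
    ∃ m, Exec D σ m μ ∧ ∀ s', Exec D σ s' μ → m = s' ∨ List.Lex (· < ·) m s' := by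
  induction hn : s.length generalizing σ s with
  | zero =>
    obtain rfl := List.eq_nil_of_length_eq_zero hn
    refine ⟨[], h, fun s' hs' => ?_⟩
    cases s' with
    | nil => exact Or.inl rfl
    | cons j _ =>
      obtain rfl : μ = σ := h
      exact absurd hs'.1 (not_le.2 (hμ j))
  | succ n ih =>
    have hex : ∃ a, D ≤ σ a := by
      cases s with
      | nil => simp at hn
      | cons j _ => exact ⟨j, h.1⟩
    obtain ⟨hmem, hs⟩ := h.erase hμ (Nat.find_spec hex)
    obtain ⟨m, hm, hmin⟩ := ih hs (by rw [List.length_erase_of_mem hmem]; omega)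
    refine ⟨Nat.find hex :: m, ⟨Nat.find_spec hex, hm⟩, fun s' hs' => ?_⟩
    cases s' with
    | nil =>
      obtain rfl : μ = σ := hs'
      exact absurd (Nat.find_spec hex) (not_le.2 (hμ _))
    | cons b t =>
      rcases (Nat.find_min' hex hs'.1).lt_or_eq with hlt | rfl
      · exact Or.inr (.rel hlt)
      · rcases hmin t hs'.2 with rfl | hlex
        · exact Or.inl rfl
        · exact Or.inr (.cons hlex)

/-- Each firing of `i` costs `D` on column `i`, and each firing of `i + 1`, resp. `i - (D - 1)`,
brings `D - 1`, resp. `1`, to it. -/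
lemma Exec.add_mul_count (hD : 2 ≤ D) (h : Exec D σ s μ) (i : ℕ) :
    μ i + D * s.count i
      = σ i + (D - 1) * s.count (i + 1) + if D - 1 ≤ i then s.count (i - (D - 1)) else 0 := by
  induction s generalizing σ with
  | nil => simp [show μ = σ from h]
  | cons j s ih =>
    have H := ih h.2
    have hj := h.1
    simp only [List.count_cons, beq_iff_eq, fireAt] at H ⊢
    simp only [Nat.mul_add, mul_ite, mul_one, mul_zero]
    rcases eq_or_ne i j with rfl | hij
    · split_ifs at H ⊢ <;> omega
    · split_ifs at H ⊢ <;> omega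

/- A unit of the height difference `σ x` stands for one grain on each of the columns `0, …, x`:
`mass R σ` counts the grains coming from the first `R` entries of `σ`, and `energy R σ` is twice
the sum of their positions. -/
def mass (R : ℕ) (σ : Config) : ℕ := ∑ x ∈ Finset.range R, (x + 1) * σ x

def energy (R : ℕ) (σ : Config) : ℕ := ∑ x ∈ Finset.range R, x * (x + 1) * σ x

lemma sum_mul_fireAt (w : ℕ → ℤ) {R : ℕ} (hD : 2 ≤ D) (hi : D ≤ σ i) (hR : i + D ≤ R) :
    ∑ x ∈ Finset.range R, w x * fireAt D σ i x
      = ∑ x ∈ Finset.range R, w x * σ x + (D - 1) * (if i = 0 then 0 else w (i - 1))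
        + w (i + D - 1) - D * w i := by
  have hpt : ∀ x, (fireAt D σ i x : ℤ) = σ x + (if x + 1 = i then (D : ℤ) - 1 else 0)
      + (if x = i + D - 1 then 1 else 0) - (if x = i then (D : ℤ) else 0) := by
    intro x
    simp only [fireAt]
    rcases eq_or_ne x i with rfl | hxi
    · split_ifs <;> omega
    · split_ifs <;> omega
  simp only [hpt, mul_add, mul_sub, Finset.sum_add_distrib, Finset.sum_sub_distrib, mul_ite,
    mul_zero, mul_one]
  rcases Nat.eq_zero_or_pos i with rfl | hi0
  · simp [Finset.sum_ite_eq', show D - 1 < R by omega, show 0 < R by omega]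
    ring
  · obtain ⟨i, rfl⟩ : ∃ i', i = i' + 1 := ⟨i - 1, by omega⟩
    simp [Finset.sum_ite_eq', show i < R by omega, show i + D < R by omega]
    rw [if_pos (by omega)]
    ring

lemma mass_fireAt {R : ℕ} (hD : 2 ≤ D) (hi : D ≤ σ i) (hR : i + D ≤ R) :
    mass R (fireAt D σ i) = mass R σ := by
  have h := sum_mul_fireAt (fun x => (x : ℤ) + 1) hD hi hR
  obtain ⟨d, rfl⟩ : ∃ d, D = d + 2 := ⟨D - 2, by omega⟩
  zify [mass]
  push_cast at h ⊢
  rw [h]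
  rcases i with _ | i
  · simp
    ring
  · simp [show i + 1 + (d + 2) - 1 = i + d + 2 by omega]
    ring

lemma energy_fireAt {R : ℕ} (hD : 2 ≤ D) (hi : D ≤ σ i) (hR : i + D ≤ R) :
    energy R (fireAt D σ i) = energy R σ + D * (D - 1) := by
  have h := sum_mul_fireAt (fun x => (x : ℤ) * (x + 1)) hD hi hR
  obtain ⟨d, rfl⟩ : ∃ d, D = d + 2 := ⟨D - 2, by omega⟩
  zify [energy]
  push_cast at h ⊢
  rw [h]
  rcases i with _ | i
  · simp
    ring
  · simp [show i + 1 + (d + 2) - 1 = i + d + 2 by omega]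
    ring

lemma energy_le_mul_mass (R : ℕ) (σ : Config) : energy R σ ≤ R * mass R σ := by
  rw [mass, Finset.mul_sum]
  refine Finset.sum_le_sum fun x hx => ?_
  rw [← mul_assoc]
  gcongr
  exact (Finset.mem_range.1 hx).le

/-- Firing conserves the mass and raises the energy by `D (D - 1)`, while the energy is at most
`R` times the mass. -/
lemma exists_reaches_stable_of_mass_add_le {R : ℕ} (hD : 2 ≤ D) (hσ : ∀ j, R ≤ j → σ j = 0)
    (hR : mass R σ + D ≤ R) : ∃ μ, Reaches D σ μ ∧ Stable D μ := by
  induction hn : R * mass R σ - energy R σ using Nat.strong_induction_on generalizing σ with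
  | _ n ih =>
    by_cases hst : Stable D σ
    · exact ⟨σ, .refl, hst⟩
    obtain ⟨i, hi⟩ : ∃ i, D ≤ σ i := by simpa [Stable] using hst
    have hiR : i < R := by
      by_contra hiR
      have := hσ i (by omega)
      omega
    have hmass : (i + 1) * σ i ≤ mass R σ :=
      Finset.single_le_sum (f := fun x => (x + 1) * σ x) (fun _ _ => Nat.zero_le _)
        (Finset.mem_range.2 hiR)
    have hiD : i + D ≤ R := by nlinarith
    have hsupp : ∀ j, R ≤ j → fireAt D σ i j = 0 := fun j hj => by
      rw [fireAt_of_ne (by omega) (by omega) (by omega), hσ j hj]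
    have hM := mass_fireAt hD hi hiD
    have hE := energy_fireAt hD hi hiD
    have hle := energy_le_mul_mass R (fireAt D σ i)
    rw [hM, hE] at hle
    have hpos : 0 < D * (D - 1) := Nat.mul_pos (by omega) (by omega)
    obtain ⟨μ, hr, hμ⟩ := ih _ (by rw [hM, hE]; omega) hsupp (hM ▸ hR) rfl
    exact ⟨μ, .head ⟨i, hi, rfl⟩ hr, hμ⟩

lemma exists_reaches_stable {R : ℕ} (hD : 2 ≤ D) (hσ : ∀ j, R ≤ j → σ j = 0) :
    ∃ μ, Reaches D σ μ ∧ Stable D μ := by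
  have hmass : mass (R + mass R σ + D) σ = mass R σ :=
    (Finset.sum_subset (Finset.range_subset_range.2 (by omega)) fun x _ hx => by
      rw [hσ x (by simpa using hx), mul_zero]).symm
  exact exists_reaches_stable_of_mass_add_le (R := R + mass R σ + D) hD
    (fun j hj => hσ j (by omega)) (by omega)

lemma piN_spec (hD : 2 ≤ D) (N : ℕ) : Reaches D (grains N) (piN D N) ∧ Stable D (piN D N) :=
  Classical.epsilon_spec (exists_reaches_stable (R := 1) hD fun j hj => by simp [grains]; omega)

lemma grains_eq_addGrain {k : ℕ} (hk : 1 ≤ k) : grains k = addGrain (grains (k - 1)) := by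
  funext j
  simp only [grains, addGrain]
  split_ifs <;> omega

lemma exists_exec_addGrain_piN {k : ℕ} (hD : 2 ≤ D) (hk : 1 ≤ k) :
    ∃ s, Exec D (addGrain (piN D (k - 1))) s (piN D k) := by
  obtain ⟨s, hs⟩ := (piN_spec hD (k - 1)).1.exists_exec
  obtain ⟨s', hs'⟩ := (piN_spec hD k).1.exists_exec
  exact hs'.exists_of_stable (piN_spec hD k).2 (grains_eq_addGrain hk ▸ hs.addGrain_addGrain)

lemma avalanche_spec {k : ℕ} (hD : 2 ≤ D) (hk : 1 ≤ k) :
    Exec D (addGrain (piN D (k - 1))) (avalanche D k) (piN D k) ∧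
      ∀ s', Exec D (addGrain (piN D (k - 1))) s' (piN D k) →
        avalanche D k = s' ∨ List.Lex (· < ·) (avalanche D k) s' := by
  obtain ⟨s, hs⟩ := exists_exec_addGrain_piN hD hk
  exact Classical.epsilon_spec (hs.exists_lexLeast (piN_spec hD k).2)

def IsGreedy (D : ℕ) (σ : Config) (s : List ℕ) : Prop :=
  ∀ p v q τ, s = p ++ v :: q → Exec D σ p τ → ∀ i, D ≤ τ i → v ≤ i

lemma IsGreedy.of_append (h : IsGreedy D σ (s ++ q)) : IsGreedy D σ s :=
  fun p v q' τ hs => h p v (q' ++ q) τ (by simp [hs])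

lemma isGreedy_of_lexLeast (hμ : Stable D μ) (h : Exec D σ s μ)
    (hmin : ∀ s', Exec D σ s' μ → s = s' ∨ List.Lex (· < ·) s s') : IsGreedy D σ s := by
  rintro p v q τ rfl hp i hi
  by_contra! hiv
  obtain ⟨τ', hp', hvq⟩ := exec_append.1 h
  obtain rfl := hp.right_unique hp'
  have hs' : Exec D σ (p ++ i :: (v :: q).erase i) μ :=
    exec_append.2 ⟨τ, hp, hi, (hvq.erase hμ hi).2⟩
  have hlt : List.Lex (· < ·) (p ++ i :: (v :: q).erase i) (p ++ v :: q) :=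
    List.Lex.append_left _ (.rel hiv) p
  rcases hmin _ hs' with heq | hlex
  · rw [heq] at hlt
    exact List.lt_irrefl _ hlt
  · exact List.lt_asymm hlex hlt

lemma foldr_max_mem {p : List ℕ} (h : p ≠ []) : p.foldr max 0 ∈ p := by
  induction p with
  | nil => exact absurd rfl h
  | cons a p ih =>
    rcases eq_or_ne p [] with rfl | hp
    · simp
    · rcases max_choice a (p.foldr max 0) with he | he <;> simp [he, ih hp]

lemma not_mem_of_foldr_max_lt {p : List ℕ} (h : p.foldr max 0 < v) : v ∉ p := fun hv =>
  absurd (List.le_max_of_le' 0 hv le_rfl) (not_le.2 h)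

lemma foldr_max_append_singleton (p : List ℕ) (v : ℕ) :
    (p ++ [v]).foldr max 0 = max (p.foldr max 0) v := by
  induction p with
  | nil => simp
  | cons a p ih => simp [ih, max_assoc]

/-- Starting from one grain on a stable configuration, no column can be fired twice: by the time
it could be, its neighbours have fired at most once and brought it fewer than `D` grains. -/
lemma Exec.nodup_of_addGrain (hD : 2 ≤ D) (hμ₀ : Stable D μ₀) (h : Exec D (addGrain μ₀) s τ) :
    s.Nodup := by
  induction s using List.reverseRecOn generalizing τ with
  | nil => exact List.nodup_nil
  | append_singleton p v ih =>
    obtain ⟨τ', hp, hv, -⟩ := exec_append_singleton.1 h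
    have hnd := ih hp
    refine List.nodup_append.2 ⟨hnd, List.nodup_singleton v, fun a ha b hb => ?_⟩
    rw [List.mem_singleton.1 hb]
    rintro rfl
    have hcount := hp.add_mul_count hD a
    have hc := List.nodup_iff_count_le_one.1 hnd
    rw [List.count_eq_one_of_mem hnd ha] at hcount
    have h1 : (D - 1) * p.count (a + 1) ≤ D - 1 := mul_le_of_le_one_right (Nat.zero_le _) (hc _)
    have h2 := hc (a - (D - 1))
    have h3 := hμ₀ a
    simp only [addGrain] at hcount
    split_ifs at hcount <;> omega

lemma Exec.not_mem_of_addGrain (hD : 2 ≤ D) (hμ₀ : Stable D μ₀)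
    (h : Exec D (addGrain μ₀) (p ++ v :: q) μ) : v ∉ p := fun hv =>
  (List.nodup_append.1 (h.nodup_of_addGrain hD hμ₀)).2.2 v hv v List.mem_cons_self rfl

lemma Exec.exists_mem_add_eq_of_fireable (hD : 2 ≤ D) (hμ₀ : Stable D μ₀)
    (h : Exec D (addGrain μ₀) p τ) (hv1 : 1 ≤ v) (hv : v ∉ p) (hv' : v + 1 ∉ p)
    (hτ : D ≤ τ v) : ∃ u ∈ p, u + (D - 1) = v := by
  have hcount := h.add_mul_count hD v
  rw [List.count_eq_zero.2 hv, List.count_eq_zero.2 hv'] at hcount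
  have := hμ₀ v
  simp only [addGrain, if_neg (show v ≠ 0 by omega)] at hcount
  split_ifs at hcount with hDv
  · exact ⟨v - (D - 1), List.count_pos_iff.1 (by omega), by omega⟩
  · omega

lemma Exec.exists_mem_add_eq_foldr_max (hD : 2 ≤ D) (hμ₀ : Stable D μ₀)
    (h : Exec D (addGrain μ₀) p τ) (hr : 1 ≤ p.foldr max 0) :
    ∃ u ∈ p, u + (D - 1) = p.foldr max 0 := by
  set r := p.foldr max 0
  have hmem : r ∈ p := foldr_max_mem (by rintro rfl; simp [r] at hr)
  obtain ⟨p₁, p₂, hsplit⟩ := List.append_of_mem hmem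
  have hsub : ∀ y ∈ p₁, y ∈ p := fun y hy => by
    rw [hsplit]
    exact List.mem_append_left _ hy
  rw [hsplit] at h
  obtain ⟨τ₁, hp₁, hfire, -⟩ := exec_append.1 h
  have hnot : r ∉ p₁ := h.not_mem_of_addGrain hD hμ₀
  have hnot' : r + 1 ∉ p₁ := fun h₁ =>
    not_mem_of_foldr_max_lt (Nat.lt_succ_self r) (hsub _ h₁)
  obtain ⟨u, hu, hu'⟩ := hp₁.exists_mem_add_eq_of_fireable hD hμ₀ hr hnot hnot' hfire
  exact ⟨u, hsub u hu, hu'⟩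

def PseudoLocal (D : ℕ) (p : List ℕ) (τ : Config) : Prop :=
  ∀ x, x ∉ p → D ≤ τ x → x < p.foldr max 0 →
    (∀ i < p.foldr max 0, i ∉ p → i ≤ x) ∧ p.foldr max 0 < x + (D - 1)

/-- Firing `v` below the maximum `r` can only make `v - 1` newly fireable, and
`v - 1 ≠ r - (D - 1)` as the latter has fired. -/
lemma PseudoLocal.append_of_lt (hD : 2 ≤ D) (hμ₀ : Stable D μ₀) (hp : Exec D (addGrain μ₀) p τ)
    (hv : D ≤ τ v) (hvp : v ∉ p) (hvr : v < p.foldr max 0) (ih : PseudoLocal D p τ) :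
    PseudoLocal D (p ++ [v]) (fireAt D τ v) := by
  set r := p.foldr max 0 with hr
  rw [PseudoLocal, foldr_max_append_singleton, ← hr, max_eq_left hvr.le]
  intro x hx hfire hxr
  simp only [List.mem_append, List.mem_singleton, not_or] at hx ⊢
  obtain ⟨hvtop, hvgap⟩ := ih v hvp hv hvr
  obtain ⟨u, hu, hur⟩ := hp.exists_mem_add_eq_foldr_max hD hμ₀ (by omega)
  by_cases hxv : x + 1 = v
  · refine ⟨fun i hi hip => ?_, ?_⟩
    · have := hvtop i hi hip.1
      omega
    · have : u ≠ x := fun h => hx.1 (h ▸ hu)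
      omega
  · have hxv' : x ≠ v + D - 1 := by omega
    rw [fireAt_of_ne hx.2 hxv hxv'] at hfire
    have := (ih x hx.1 hfire hxr).1 v hvr hvp
    have := hvtop x hxr hx.1
    omega

/-- Below a new maximum `v`, only `v - 1` can be fireable after firing `v` (any other column was
fireable before, against greediness), and `v - 1 ≠ v - (D - 1)` as the latter has fired. -/
lemma PseudoLocal.append_of_le (hD : 2 ≤ D) (hμ₀ : Stable D μ₀) (hp : Exec D (addGrain μ₀) p τ)
    (hv : D ≤ τ v) (hvp : v ∉ p) (hrv : p.foldr max 0 ≤ v) (hgreedy : ∀ i, D ≤ τ i → v ≤ i) :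
    PseudoLocal D (p ++ [v]) (fireAt D τ v) := by
  rw [PseudoLocal, foldr_max_append_singleton, max_eq_right hrv]
  intro x hx hfire hxv
  simp only [List.mem_append, List.mem_singleton, not_or] at hx
  by_cases hxv1 : x + 1 = v
  · obtain ⟨u, hu, huv⟩ := hp.exists_mem_add_eq_of_fireable hD hμ₀ (by omega) hvp
      (not_mem_of_foldr_max_lt (by omega)) hv
    have : u ≠ x := fun h => hx.1 (h ▸ hu)
    exact ⟨fun i hi _ => by omega, by omega⟩
  · rw [fireAt_of_ne hx.2 hxv1 (by omega)] at hfire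
    exact absurd (hgreedy x hfire) (by omega)

lemma Exec.pseudoLocal (hD : 2 ≤ D) (hμ₀ : Stable D μ₀) (h : Exec D (addGrain μ₀) p τ)
    (hg : IsGreedy D (addGrain μ₀) p) : PseudoLocal D p τ := by
  induction p using List.reverseRecOn generalizing τ with
  | nil => exact fun x _ _ hx => absurd hx (Nat.not_lt_zero x)
  | append_singleton p v ih =>
    obtain ⟨τ', hp, hv, rfl⟩ := exec_append_singleton.1 h
    have hvp : v ∉ p := h.not_mem_of_addGrain hD hμ₀
    rcases lt_or_ge v (p.foldr max 0) with hvr | hrv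
    · exact .append_of_lt hD hμ₀ hp hv hvp hvr (ih hp hg.of_append)
    · exact .append_of_le hD hμ₀ hp hv hvp hrv (hg p v [] τ' rfl hp)

lemma pseudo_local_of_isGreedy (hD : 2 ≤ D) (hμ₀ : Stable D μ₀)
    (h : Exec D (addGrain μ₀) (p ++ v :: q) μ) (hg : IsGreedy D (addGrain μ₀) (p ++ v :: q)) :
    (v < p.foldr max 0 →
      v ∉ p ∧ (∀ i, i < p.foldr max 0 → i ∉ p → i ≤ v) ∧ p.foldr max 0 - v < D - 1) ∧
    (p.foldr max 0 < v → v ≤ p.foldr max 0 + (D - 1)) := by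
  obtain ⟨τ, hp, hv, -⟩ := exec_append.1 h
  have hvp : v ∉ p := h.not_mem_of_addGrain hD hμ₀
  refine ⟨fun hvr => ?_, fun hrv => ?_⟩
  · obtain ⟨htop, hgap⟩ := hp.pseudoLocal hD hμ₀ hg.of_append v hvp hv hvr
    exact ⟨hvp, htop, by omega⟩
  · obtain ⟨u, hu, huv⟩ := hp.exists_mem_add_eq_of_fireable hD hμ₀ (by omega) hvp
      (not_mem_of_foldr_max_lt (by omega)) hv
    have := List.le_max_of_le' 0 hu le_rfl
    omega

end

theorem avalanche_pseudo_local_general (D k : ℕ) (hD : 2 ≤ D) (hk : 1 ≤ k) (t : ℕ)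
    (ht : t < (avalanche D k).length) :
    (((avalanche D k).getD t 0 < ((avalanche D k).take t).foldr max 0 →
      ((avalanche D k).getD t 0 ∉ (avalanche D k).take t ∧
        (∀ i, i < ((avalanche D k).take t).foldr max 0 →
          i ∉ (avalanche D k).take t → i ≤ (avalanche D k).getD t 0) ∧
        ((avalanche D k).take t).foldr max 0 - (avalanche D k).getD t 0
          < D - 1)) ∧
    (((avalanche D k).take t).foldr max 0 < (avalanche D k).getD t 0 →
      (avalanche D k).getD t 0 ≤ ((avalanche D k).take t).foldr max 0
        + (D - 1))) := by
  obtain ⟨hexec, hmin⟩ := avalanche_spec hD hk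
  have hsplit : avalanche D k
      = (avalanche D k).take t ++ (avalanche D k)[t] :: (avalanche D k).drop (t + 1) := by
    rw [← List.drop_eq_getElem_cons ht, List.take_append_drop]
  rw [List.getD_eq_getElem _ _ ht]
  rw [hsplit] at hexec hmin
  exact pseudo_local_of_isGreedy hD (piN_spec hD (k - 1)).2 hexec
    (isGreedy_of_lexLeast (piN_spec hD k).2 hexec hmin)

/-- Pseudo-locality of avalanches. Let `s^k` be the `k`-th avalanche, `t < T`
a (1-based) time, `r_t` the maximum of the first `t` fired columns and `v` the
column fired at time `t+1` (0-based index `t`). Then: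
(i) if `v < r_t` then `v` is the largest column `< r_t` not yet fired, and
`r_t − v < D−1`; (ii) if `v > r_t` then `v ≤ r_t + D−1`. -/
theorem avalanche_pseudo_local (D k : ℕ) (hD : 2 ≤ D) (hk : 1 ≤ k) (t : ℕ)
    (ht1 : 1 ≤ t) (ht : t < (avalanche D k).length) :
    (((avalanche D k).getD t 0 < ((avalanche D k).take t).foldr max 0 →
      ((avalanche D k).getD t 0 ∉ (avalanche D k).take t ∧
        (∀ i, i < ((avalanche D k).take t).foldr max 0 →
          i ∉ (avalanche D k).take t → i ≤ (avalanche D k).getD t 0) ∧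
        ((avalanche D k).take t).foldr max 0 - (avalanche D k).getD t 0
          < D - 1)) ∧
    (((avalanche D k).take t).foldr max 0 < (avalanche D k).getD t 0 →
      (avalanche D k).getD t 0 ≤ ((avalanche D k).take t).foldr max 0
        + (D - 1))) :=
  avalanche_pseudo_local_general D k hD hk t ht
end

section
/- Let L denote the language {ab·u : u a word over {a,b}} ∪ {ε, a}. Then: (i) for every word u over {a,b}, t'(u) ∈ L; (ii) for every v ∈ L, t(v) ∈ L; (iii) for every word u over {a,b}, t(t(u)) ∈ L. -/
/-! Writing `B` for the image of `L` under the swap `a ↔ b`, the outputs from states `21`, `12`, `22`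
lie in `L`, `B`, `B` respectively: `22` always emits `ba` first, while `21` and `12` either emit the
first two letters themselves or emit one letter and pass to the other of the two states. Hence every
run lies in `L ∪ B`, and on an input `x · x̄ · u` the transducer reaches `21` from `00` silently, so
`t` maps `L ∪ B` into `L`. Below, `L` and `B` are `StartsAlternating false` and
`StartsAlternating true`. -/

def StartsAlternating (x : Bool) (w : List Bool) : Prop :=
  w.take 2 <+: [x, !x]

theorem mem_langL_iff {w : List Bool} : w ∈ LangL ↔ StartsAlternating false w := by
  rcases w with _ | ⟨_ | _, _ | ⟨_ | _, w⟩⟩ <;> simp [LangL, StartsAlternating]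

theorem StartsAlternating.cons {x : Bool} {w : List Bool} (h : StartsAlternating (!x) w) :
    StartsAlternating x (x :: w) := by
  rcases w with _ | ⟨y, w⟩ <;> simp_all [StartsAlternating]

theorem startsAlternating_runT_s22 (u : List Bool) : StartsAlternating true (runT .s22 u) := by
  rcases u with _ | ⟨_ | _, u⟩ <;> simp [runT, tStep, StartsAlternating]

theorem startsAlternating_runT_s21_s12 (u : List Bool) :
    StartsAlternating false (runT .s21 u) ∧ StartsAlternating true (runT .s12 u) := by
  induction u with
  | nil => simp [runT, StartsAlternating]
  | cons x u ih =>
    obtain ⟨h21, h12⟩ := ih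
    cases x
    · exact ⟨StartsAlternating.cons h12, startsAlternating_runT_s22 u⟩
    · exact ⟨by simp [runT, tStep, StartsAlternating], StartsAlternating.cons h21⟩

theorem exists_startsAlternating_runT (q : TSt) (u : List Bool) :
    ∃ x, StartsAlternating x (runT q u) := by
  induction u generalizing q with
  | nil => exact ⟨false, by simp [runT, StartsAlternating]⟩
  | cons y u ih =>
    cases q
    case s21 => exact ⟨false, (startsAlternating_runT_s21_s12 _).1⟩
    case s12 => exact ⟨true, (startsAlternating_runT_s21_s12 _).2⟩
    case s22 => exact ⟨true, startsAlternating_runT_s22 _⟩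
    all_goals cases y <;> exact ih _

theorem tT_cons_cons_not (x : Bool) (u : List Bool) : tT (x :: (!x) :: u) = tT' u := by
  cases x <;> rfl

theorem tT_mem_langL {x : Bool} {w : List Bool} (h : StartsAlternating x w) : tT w ∈ LangL := by
  rcases w with _ | ⟨y, _ | ⟨z, w⟩⟩
  · exact Or.inr (Or.inl rfl)
  · cases y <;> exact Or.inr (Or.inl rfl)
  · obtain ⟨rfl, rfl⟩ : y = x ∧ z = !x := by simpa [StartsAlternating] using h
    rw [tT_cons_cons_not, mem_langL_iff]
    exact (startsAlternating_runT_s21_s12 w).1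

/-- (i) `t'(u) ∈ L` for every word `u`; (ii) `t(v) ∈ L` for every `v ∈ L`;
(iii) `t(t(u)) ∈ L` for every word `u`. -/
theorem transducer_language_L :
    (∀ u : List Bool, tT' u ∈ LangL) ∧
    (∀ v ∈ LangL, tT v ∈ LangL) ∧
    (∀ u : List Bool, tT (tT u) ∈ LangL) := by
  refine ⟨fun u => mem_langL_iff.2 (startsAlternating_runT_s21_s12 u).1,
    fun v hv => tT_mem_langL (mem_langL_iff.1 hv), fun u => ?_⟩
  obtain ⟨x, hx⟩ := exists_startsAlternating_runT .s00 u
  exact tT_mem_langL hx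
end

section
/- For every word v in the language L = {ab·u : u a word over {a,b}} ∪ {ε, a}, the height satisfies h(t(v)) ≤ h(v)/4 + 1. -/
/-!
Let `balance w = |w|_a - |w|_b`, so that `h(w) = |balance w|`. After reading `ab` the transducer
is in state `21`, and from then on it stays in the strongly connected component
`{11, 12, 21, 22}`. On that component the potential `21 ↦ 0, 11 ↦ -1, 22 ↦ -2, 12 ↦ -3` satisfies
`balance x - 4 · balance (output) = potential q' - potential q` for every transition `q -x-> q'`,
so along any run `balance u - 4 · balance (t' u)` telescopes to a difference of potentials,
which lies in `[-3, 3]`. Hence `4 h(t'(u)) ≤ h(u) + 3`.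
-/

def balance (w : List Bool) : ℤ := (w.count false : ℤ) - (w.count true : ℤ)

theorem balance_append (w₁ w₂ : List Bool) : balance (w₁ ++ w₂) = balance w₁ + balance w₂ := by
  simp only [balance, List.count_append]
  push_cast
  ring

theorem balance_cons (x : Bool) (u : List Bool) : balance (x :: u) = balance [x] + balance u := by
  simpa using balance_append [x] u

theorem hgt_eq_natAbs_balance (w : List Bool) : hgt w = (balance w).natAbs := rfl

theorem balance_false_true_cons (u : List Bool) : balance (false :: true :: u) = balance u := by
  simp [balance]

namespace TSt

def IsCore : TSt → Prop
  | s11 | s12 | s21 | s22 => True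
  | s00 | s10 | s20 => False

def potential : TSt → ℤ
  | s21 => 0
  | s11 => -1
  | s22 => -2
  | s12 => -3
  | s00 | s10 | s20 => 0 -- arbitrary: only read on core states

theorem IsCore.tStep_fst {q : TSt} (hq : q.IsCore) (x : Bool) : (tStep q x).1.IsCore := by
  cases q <;> cases x <;> simp_all [IsCore, tStep]

theorem IsCore.potential_bounds {q : TSt} (hq : q.IsCore) : -3 ≤ q.potential ∧ q.potential ≤ 0 := by
  cases q <;> simp_all [IsCore, potential]

theorem IsCore.balance_sub_four_mul_balance_tStep {q : TSt} (hq : q.IsCore) (x : Bool) :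
    balance [x] - 4 * balance (tStep q x).2 = (tStep q x).1.potential - q.potential := by
  cases q <;> cases x <;> simp_all [IsCore, tStep, potential, balance]

def endState (q : TSt) (u : List Bool) : TSt := u.foldl (fun q x => (tStep q x).1) q

theorem IsCore.endState {q : TSt} (hq : q.IsCore) (u : List Bool) : (q.endState u).IsCore := by
  induction u generalizing q with
  | nil => exact hq
  | cons x u ih => exact ih (hq.tStep_fst x)

end TSt

theorem balance_sub_four_mul_balance_runT {q : TSt} (hq : q.IsCore) (u : List Bool) :
    balance u - 4 * balance (runT q u) = (q.endState u).potential - q.potential := by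
  induction u generalizing q with
  | nil => simp [runT, TSt.endState, balance]
  | cons x u ih =>
    have hstep := hq.balance_sub_four_mul_balance_tStep x
    have hrest := ih (hq.tStep_fst x)
    rw [runT, balance_append, balance_cons]
    simp only [TSt.endState, List.foldl_cons] at hrest ⊢
    linarith

theorem four_mul_hgt_tT'_le (u : List Bool) : 4 * hgt (tT' u) ≤ hgt u + 3 := by
  have hcore : TSt.s21.IsCore := trivial
  have htelescope := balance_sub_four_mul_balance_runT hcore u
  obtain ⟨hlow, hhigh⟩ := (hcore.endState u).potential_bounds
  rw [show TSt.s21.potential = 0 from rfl] at htelescope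
  rw [hgt_eq_natAbs_balance, hgt_eq_natAbs_balance, tT']
  omega

theorem tT_false_true_cons (u : List Bool) : tT (false :: true :: u) = tT' u := by
  simp [tT, tT', runT, tStep]

theorem four_mul_hgt_tT_le_of_mem_LangL {v : List Bool} (hv : v ∈ LangL) :
    4 * hgt (tT v) ≤ hgt v + 4 := by
  rcases hv with ⟨u, rfl⟩ | hv
  · rw [tT_false_true_cons, hgt_eq_natAbs_balance (false :: true :: u),
      balance_false_true_cons, ← hgt_eq_natAbs_balance]
    linarith [four_mul_hgt_tT'_le u]
  · rcases hv with rfl | rfl <;> simp [tT, runT, tStep, hgt]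

/-- For every `v` in the language `L`, `h(t(v)) ≤ h(v)/4 + 1`. -/
theorem transducer_height_decrease :
    ∀ v ∈ LangL, (hgt (tT v) : ℝ) ≤ (hgt v : ℝ) / 4 + 1 := by
  intro v hv
  have h : (4 * hgt (tT v) : ℝ) ≤ hgt v + 4 := by
    exact_mod_cast four_mul_hgt_tT_le_of_mem_LangL hv
  linarith
end

section
/- For every word w over {a,b} such that every prefix w' of w satisfies | |w'|_a − |w'|_b | ≤ 1 (i.e., g(w) ≤ 1), the word t(w) is a prefix of the infinite periodic word (ab)^ω = ababab⋯. -/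
/-! Write `excess u = |u|_a - |u|_b`. As long as every prefix read so far has height at most 1,
the pairs (state, excess) met along a run from `(00, 0)` are only `(00, 0)`, `(10, 1)`, `(11, -1)`,
`(21, 0)` and `(12, 1)` (`Admissible`). In each of them the output so far is a prefix of `(ab)^ω`
whose next letter is `b` in state `12` and `a` otherwise, and every transition between these
configurations emits a block that continues the alternation. -/

def Alternates : Bool → List Bool → Prop
  | _, [] => True
  | b, x :: w => x = b ∧ Alternates (!b) w

theorem alternates_iff {b : Bool} {w : List Bool} :
    Alternates b w ↔ ∀ i (hi : i < w.length), w[i] = (b ^^ decide (i % 2 = 1)) := by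
  induction w generalizing b with
  | nil => simp [Alternates]
  | cons x w ih =>
    simp only [Alternates, ih, List.length_cons, Nat.forall_lt_succ_left', List.getElem_cons_zero,
      List.getElem_cons_succ, Nat.succ_mod_two_eq_one_iff, ← Nat.mod_two_ne_one, decide_not]
    cases b <;> simp

theorem prefixAB_iff_alternates {w : List Bool} : PrefixAB w ↔ Alternates false w := by
  simp [PrefixAB, alternates_iff]

def excess (u : List Bool) : ℤ := u.count false - u.count true

def weight : Bool → ℤ
  | false => 1
  | true => -1

theorem excess_nil : excess [] = 0 := rfl

theorem excess_cons (x : Bool) (u : List Bool) : excess (x :: u) = weight x + excess u := by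
  cases x <;> simp [excess, weight] <;> ring

def Admissible : TSt → ℤ → Prop
  | .s00, d => d = 0
  | .s10, d => d = 1
  | .s11, d => d = -1
  | .s21, d => d = 0
  | .s12, d => d = 1
  | _, _ => False

def expectedLetter : TSt → Bool
  | .s12 => true
  | _ => false

theorem admissible_tStep {q : TSt} {d : ℤ} {x : Bool} (hq : Admissible q d)
    (hx : (d + weight x).natAbs ≤ 1) :
    Admissible (tStep q x).1 (d + weight x) ∧ ∀ v,
      Alternates (expectedLetter (tStep q x).1) v →
        Alternates (expectedLetter q) ((tStep q x).2 ++ v) := by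
  cases q <;> cases x <;> simp_all [Admissible, Alternates, tStep, weight, expectedLetter]

theorem alternates_runT {u : List Bool} {q : TSt} {d : ℤ} (hq : Admissible q d)
    (hu : ∀ u', u' <+: u → (d + excess u').natAbs ≤ 1) :
    Alternates (expectedLetter q) (runT q u) := by
  induction u generalizing q d with
  | nil => trivial
  | cons x v ih =>
    have hx : (d + weight x).natAbs ≤ 1 := by
      simpa [excess_cons, excess_nil] using hu [x] (List.prefix_cons_inj x |>.mpr v.nil_prefix)
    obtain ⟨hq', hout⟩ := admissible_tStep hq hx
    refine hout _ (ih hq' fun u' hu' => ?_)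
    simpa [excess_cons, add_assoc] using hu (x :: u') (List.prefix_cons_inj x |>.mpr hu')

/-- If every prefix `w'` of `w` satisfies `| |w'|_a − |w'|_b | ≤ 1` (i.e.
`g(w) ≤ 1`), then `t(w)` is a prefix of `(ab)^ω`. -/
theorem transducer_low_height_gives_prefix_ab (w : List Bool)
    (h : ∀ w', w' <+: w → hgt w' ≤ 1) :
    PrefixAB (tT w) :=
  prefixAB_iff_alternates.mpr <| alternates_runT (q := .s00) (d := 0) rfl fun u' hu' => by
    simpa [hgt, excess] using h u' hu'
end

section
/- For every configuration σ there exists a unique stable configuration π(σ) with σ →* π(σ); moreover, for every configuration σ' with σ →* σ', the unique stable configuration reachable from σ' equals π(σ). -/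
open scoped Classical

/-! Write `h j = ∑_{k ≥ j} σ k` for the height of column `j`. Firing column `i` moves
`D - 1` grains from column `i` onto columns `i + 1, …, i + D - 1`, each of height at most
`h i - D`, so the energy `∑ j, (h j)²` drops by at least `D (D - 1)`: every firing sequence
terminates. Firing two distinct columns commutes and never disables the other one, so the
rewriting system is strongly confluent and all its normal forms reachable from `σ` coincide. -/

namespace KSPM

lemma le_fireAt_of_ne {D : ℕ} {σ : Config} {i j : ℕ} (hj : j ≠ i) : σ j ≤ fireAt D σ i j := by
  simp only [fireAt]; split_ifs <;> omega

lemma fireAt_comm {D : ℕ} {σ : Config} {i j : ℕ} (hi : D ≤ σ i) (hj : D ≤ σ j) :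
    fireAt D (fireAt D σ i) j = fireAt D (fireAt D σ j) i := by
  funext k
  simp only [fireAt]
  split_ifs <;> subst_vars <;> omega

lemma stepRel_diamond (D : ℕ) (σ τ ρ : Config) (hτ : StepRel D σ τ) (hρ : StepRel D σ ρ) :
    ∃ χ, Relation.ReflGen (StepRel D) τ χ ∧ Reaches D ρ χ := by
  obtain ⟨i, hi, rfl⟩ := hτ
  obtain ⟨j, hj, rfl⟩ := hρ
  rcases eq_or_ne i j with rfl | hij
  · exact ⟨_, .refl, .refl⟩
  · exact ⟨fireAt D (fireAt D σ i) j, .single ⟨j, hj.trans (le_fireAt_of_ne hij.symm), rfl⟩,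
      .single ⟨i, hi.trans (le_fireAt_of_ne hij), fireAt_comm hi hj⟩⟩

lemma eq_of_stable_of_reaches {D : ℕ} {σ μ : Config} (hσ : Stable D σ) (h : Reaches D σ μ) :
    μ = σ := by
  rcases h.cases_head with rfl | ⟨_, ⟨i, hi, _⟩, _⟩
  · rfl
  · exact absurd hi (hσ i).not_ge

lemma stable_reaches_unique {D : ℕ} {σ μ μ' : Config} (hμ : Reaches D σ μ) (hμs : Stable D μ)
    (hμ' : Reaches D σ μ') (hμ's : Stable D μ') : μ' = μ := by
  obtain ⟨χ, hχ, hχ'⟩ := Relation.church_rosser (stepRel_diamond D) hμ hμ'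
  rw [← eq_of_stable_of_reaches hμs hχ, ← eq_of_stable_of_reaches hμ's hχ']

lemma fireAt_apply_add {D : ℕ} (hD : 2 ≤ D) {σ : Config} {i : ℕ} (hi : D ≤ σ i) (k : ℕ) :
    fireAt D σ i k + (if k = i then D else 0)
      = σ k + (if k = i + D - 1 then 1 else 0) + (if k + 1 = i then D - 1 else 0) := by
  simp only [fireAt]; split_ifs <;> subst_vars <;> omega

def height (σ : Config) (n j : ℕ) : ℕ := ∑ k ∈ Finset.Ico j n, σ k

lemma height_of_le (σ : Config) {n j : ℕ} (h : n ≤ j) : height σ n j = 0 := by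
  simp [height, Finset.Ico_eq_empty_of_le h]

lemma height_of_lt (σ : Config) {n j : ℕ} (h : j < n) :
    height σ n j = σ j + height σ n (j + 1) :=
  Finset.sum_eq_sum_Ico_succ_bot h σ

lemma height_antitone (σ : Config) (n : ℕ) : Antitone (height σ n) := fun _ _ h =>
  Finset.sum_le_sum_of_subset (Finset.Ico_subset_Ico h le_rfl)

lemma height_fireAt {D : ℕ} (hD : 2 ≤ D) {σ : Config} {i n : ℕ} (hi : D ≤ σ i) (hn : i + D ≤ n)
    (j : ℕ) : height (fireAt D σ i) n j + (if j ≤ i then D else 0)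
      = height σ n j + (if j < i + D then 1 else 0) + (if j < i then D - 1 else 0) := by
  induction h : n - j generalizing j with
  | zero => simp only [height_of_le _ (show n ≤ j by omega)]; split_ifs <;> omega
  | succ d ih =>
    have hj : j < n := by omega
    rw [height_of_lt _ hj, height_of_lt _ hj]
    have step := ih (j + 1) (by omega)
    have fire := fireAt_apply_add hD hi j
    split_ifs at step fire ⊢ <;> omega

def energy (σ : Config) (n : ℕ) : ℕ := ∑ j ∈ Finset.range n, height σ n j ^ 2

-- Column `i` pays `2 (h i - D) + 1` for the increment of each of the `D - 1` columns above it,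
-- with `D (D - 1)` to spare.
lemma sq_height_fireAt_le {D : ℕ} (hD : 2 ≤ D) {σ : Config} {i n : ℕ} (hi : D ≤ σ i)
    (hn : i + D ≤ n) (j : ℕ) :
    height (fireAt D σ i) n j ^ 2
        + (if j = i then (D - 1) * (2 * (height σ n i - D) + 1) + D * (D - 1) else 0)
      ≤ height σ n j ^ 2
        + (if j ∈ Finset.Ico (i + 1) (i + D) then 2 * (height σ n i - D) + 1 else 0) := by
  have hj := height_fireAt hD hi hn j
  have hσi := height_of_lt σ (show i < n by omega)
  obtain ⟨a, ha⟩ : ∃ a, height σ n i = a + D := ⟨height σ n i - D, by omega⟩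
  simp only [ha, Nat.add_sub_cancel, Finset.mem_Ico]
  by_cases hji : j = i
  · subst hji
    have hx : height (fireAt D σ j) n j = a + 1 := by
      rw [if_pos le_rfl, if_pos (by omega), if_neg (lt_irrefl j)] at hj
      omega
    rw [hx, ha, if_pos rfl, if_neg (by omega)]
    obtain ⟨d, rfl⟩ : ∃ d, D = d + 2 := ⟨D - 2, by omega⟩
    simp only [show d + 2 - 1 = d + 1 by omega]
    ring_nf; omega
  by_cases hmid : i + 1 ≤ j ∧ j < i + D
  · have hx : height (fireAt D σ i) n j = height σ n j + 1 := by
      simp only [if_pos hmid.2, if_neg (show ¬ j ≤ i by omega),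
        if_neg (show ¬ j < i by omega)] at hj
      omega
    have hle : height σ n j ≤ a := by
      have := height_antitone σ n hmid.1
      omega
    rw [hx, if_neg hji, if_pos hmid]
    nlinarith
  · have hx : height (fireAt D σ i) n j = height σ n j := by
      split_ifs at hj <;> omega
    rw [hx, if_neg hji, if_neg hmid]

lemma energy_fireAt_add_le {D : ℕ} (hD : 2 ≤ D) {σ : Config} {i n : ℕ} (hi : D ≤ σ i)
    (hn : i + D ≤ n) : energy (fireAt D σ i) n + D * (D - 1) ≤ energy σ n := by
  have hsum := Finset.sum_le_sum fun j (_ : j ∈ Finset.range n) => sq_height_fireAt_le hD hi hn j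
  have hsub : Finset.Ico (i + 1) (i + D) ⊆ Finset.range n := fun j hj => by
    simp only [Finset.mem_Ico, Finset.mem_range] at hj ⊢; omega
  rw [Finset.sum_add_distrib, Finset.sum_add_distrib, Finset.sum_ite_eq',
    if_pos (Finset.mem_range.mpr (by omega)), Finset.sum_ite_mem,
    Finset.inter_eq_right.mpr hsub, Finset.sum_const, Nat.card_Ico,
    show i + D - (i + 1) = D - 1 by omega, smul_eq_mul] at hsum
  unfold energy
  linarith

lemma height_eq_of_vanish {σ : Config} {n m : ℕ} (hσ : ∀ j, n ≤ j → σ j = 0) (hnm : n ≤ m)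
    (j : ℕ) : height σ m j = height σ n j := by
  unfold height
  rcases le_total j n with hjn | hnj
  · rw [← Finset.sum_Ico_consecutive σ hjn hnm, Finset.sum_eq_zero fun k hk =>
      hσ k (Finset.mem_Ico.mp hk).1, add_zero]
  · rw [Finset.Ico_eq_empty_of_le hnj, Finset.sum_eq_zero fun k hk =>
      hσ k (hnj.trans (Finset.mem_Ico.mp hk).1), Finset.sum_empty]

lemma energy_eq_of_vanish {σ : Config} {n m : ℕ} (hσ : ∀ j, n ≤ j → σ j = 0) (hnm : n ≤ m) :
    energy σ m = energy σ n := by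
  have htail : ∑ j ∈ Finset.Ico n m, height σ m j ^ 2 = 0 := Finset.sum_eq_zero fun j hj => by
    rw [height_eq_of_vanish hσ hnm, height_of_le σ (Finset.mem_Ico.mp hj).1, sq, zero_mul]
  unfold energy
  rw [← Finset.sum_range_add_sum_Ico _ hnm, htail, add_zero]
  exact Finset.sum_congr rfl fun j _ => by rw [height_eq_of_vanish hσ hnm]

lemma fireAt_apply_eq_zero {D : ℕ} {σ : Config} {i n : ℕ} (hσ : ∀ j, n ≤ j → σ j = 0)
    (hin : i < n) : ∀ j, n + D ≤ j → fireAt D σ i j = 0 := fun j hj => by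
  simp only [fireAt, if_neg (show j ≠ i by omega), if_neg (show j + 1 ≠ i by omega),
    if_neg (show j ≠ i + D - 1 by omega)]
  exact hσ j (by omega)

lemma exists_reaches_stable_of_vanish {D : ℕ} (hD : 2 ≤ D) {σ : Config} {n : ℕ}
    (hσ : ∀ j, n ≤ j → σ j = 0) : ∃ μ, Reaches D σ μ ∧ Stable D μ := by
  induction h : energy σ n using Nat.strong_induction_on generalizing σ n with
  | _ e ih =>
    by_cases hst : Stable D σ
    · exact ⟨σ, .refl, hst⟩
    obtain ⟨i, hi⟩ : ∃ i, D ≤ σ i := by simpa [Stable] using hst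
    have hin : i < n := by
      by_contra! hni
      have := hσ i hni
      omega
    have hdrop : energy (fireAt D σ i) (n + D) < e := by
      have hle := energy_fireAt_add_le hD hi (show i + D ≤ n + D by omega)
      rw [energy_eq_of_vanish hσ (by omega), h] at hle
      have : 0 < D * (D - 1) := Nat.mul_pos (by omega) (by omega)
      omega
    obtain ⟨μ, hμ, hst⟩ := ih _ hdrop (fireAt_apply_eq_zero hσ hin) rfl
    exact ⟨μ, .head ⟨i, hi, rfl⟩ hμ, hst⟩

end KSPM

/-- Existence and uniqueness of the fixed point: every (finitely supported)
configuration reaches a unique stable configuration `π(σ)`; moreover any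
configuration reachable from `σ` reaches the same stable configuration. -/
theorem unique_stable_configuration (D : ℕ) (hD : 2 ≤ D) (σ : Config)
    (hfin : (Function.support σ).Finite) :
    (∃! μ, Reaches D σ μ ∧ Stable D μ) ∧
    ∀ σ' μ μ', Reaches D σ σ' → Reaches D σ μ → Stable D μ →
      Reaches D σ' μ' → Stable D μ' → μ' = μ := by
  obtain ⟨n, hn⟩ := hfin.bddAbove
  have hσ : ∀ j, n + 1 ≤ j → σ j = 0 := fun j hj =>
    Function.notMem_support.mp fun hmem => absurd (hn hmem) (by omega)
  obtain ⟨μ, hμ, hμs⟩ := KSPM.exists_reaches_stable_of_vanish hD hσ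
  refine ⟨⟨μ, ⟨hμ, hμs⟩, fun μ' ⟨hμ', hμ's⟩ => KSPM.stable_reaches_unique hμ hμs hμ' hμ's⟩, ?_⟩
  intro σ' ν ν' hσ' hν hνs hν' hν's
  exact KSPM.stable_reaches_unique hν hνs (hσ'.trans hν') hν's
end
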